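/- For all integers ℓ ≥ 2, r̃(K_{1,3}, P_ℓ) ≥ ⌊3ℓ/2⌋: Painter has a strategy preventing both a red K_{1,3} and a blue path on ℓ vertices for the first ⌊3ℓ/2⌋ − 1 rounds of the online Ramsey game. -/

import Mathlib

/-!
Painter colours an edge red unless this creates a red `K_{1,3}` or a red cycle of length at most
`L = ⌊ℓ/2⌋`. While at most `L` edges are red, no red cycle fits, so the red graph is a
vertex-disjoint union of paths. A blue `P_ℓ` within `⌊3ℓ/2⌋ - 1` rounds leaves at most `L` red
edges, and each of its `ℓ - 1` edges was coloured blue because an endpoint is an inner vertex of a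
red path or because its endpoints are the two ends of a red path on at most `L` vertices. Charging
each blue edge to such an inner vertex (at most twice each) or to such a short red path (at most
once each) yields at most `2L - 2 < ℓ - 1` charges.

Since `onlineRamsey` is an infimum over `ℕ` and `sInf ∅ = 0`, the bound also needs Builder to win
at all: after all edges of `K_{ℓ+2}` are drawn, either some vertex has three red neighbours or
every vertex has `ℓ - 1` blue ones, and a blue `P_ℓ` is found greedily.
-/

open SimpleGraph

/-- A history of the online Ramsey game: a list of moves, each an edge together
with its color (`true` = red, `false` = blue). The most recent move comes first. -/
abbrev History := List (Sym2 ℕ × Bool)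

/-- The simple graph on `ℕ` formed by the edges of the history `h` having color `col`. -/
def histGraph (h : History) (col : Bool) : SimpleGraph ℕ where
  Adj u v := u ≠ v ∧ (s(u, v), col) ∈ h
  symm := ⟨fun u v hadj => ⟨hadj.1.symm, by rw [Sym2.eq_swap]; exact hadj.2⟩⟩
  loopless := ⟨fun u hadj => hadj.1 rfl⟩

/-- The subgraph of `G` consisting of its edges of color `col` under the coloring `c`. -/
def colorSub {V : Type*} (G : SimpleGraph V) (c : Sym2 V → Bool) (col : Bool) :
    SimpleGraph V where
  Adj u v := G.Adj u v ∧ c s(u, v) = col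
  symm := ⟨fun u v hadj => ⟨hadj.1.symm, by rw [Sym2.eq_swap]; exact hadj.2⟩⟩
  loopless := ⟨fun u hadj => G.irrefl hadj.1⟩

/-- `G` has a copy in `H` (an injective graph homomorphism). -/
def HasCopy {α β : Type*} (G : SimpleGraph α) (H : SimpleGraph β) : Prop :=
  ∃ f : α → β, Function.Injective f ∧ ∀ a b, G.Adj a b → H.Adj (f a) (f b)

/-- A Builder strategy chooses the next edge from the current history. -/
abbrev BuilderStrategy := History → Sym2 ℕ

/-- A Painter strategy colors the edge just drawn, given the current history. -/
abbrev PainterStrategy := History → Sym2 ℕ → Bool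

/-- A Builder strategy is valid if it always draws a non-loop edge that has
not been drawn before. -/
def ValidStrategy (B : BuilderStrategy) : Prop :=
  ∀ h : History, ¬ (B h).IsDiag ∧ ∀ c : Bool, (B h, c) ∉ h

/-- The history after `n` further rounds of play, starting from history `h0`,
with Builder playing `B` and Painter playing `P`. -/
def playFrom (h0 : History) (B : BuilderStrategy) (P : PainterStrategy) : ℕ → History
  | 0 => h0
  | n + 1 =>
      let h := playFrom h0 B P n
      (B h, P h (B h)) :: h

/-- The history after `n` rounds of play from scratch. -/
def play (B : BuilderStrategy) (P : PainterStrategy) (n : ℕ) : History :=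
  playFrom [] B P n

/-- Builder can force a red copy of `G` or a blue copy of `H` within `n` rounds. -/
def BuilderWins {α β : Type*} (G : SimpleGraph α) (H : SimpleGraph β) (n : ℕ) : Prop :=
  ∃ B : BuilderStrategy, ValidStrategy B ∧ ∀ P : PainterStrategy,
    HasCopy G (histGraph (play B P n) true) ∨ HasCopy H (histGraph (play B P n) false)

/-- The online Ramsey number of `G` versus `H`. -/
noncomputable def onlineRamsey {α β : Type*} (G : SimpleGraph α) (H : SimpleGraph β) : ℕ :=
  sInf {n | BuilderWins G H n}

/-- The star `K_{1,3}` with three edges. -/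
abbrev K13 : SimpleGraph (Fin 1 ⊕ Fin 3) := completeBipartiteGraph (Fin 1) (Fin 3)

open Finset

section PathEdges

variable {α : Type*}

def pathEdges : List α → List (Sym2 α)
  | a :: b :: t => s(a, b) :: pathEdges (b :: t)
  | _ => []

@[simp] lemma pathEdges_nil : pathEdges ([] : List α) = [] := rfl

@[simp] lemma pathEdges_singleton (a : α) : pathEdges [a] = [] := rfl

@[simp] lemma pathEdges_cons_cons (a b : α) (t : List α) :
    pathEdges (a :: b :: t) = s(a, b) :: pathEdges (b :: t) := rfl

@[simp] lemma length_pathEdges (l : List α) : (pathEdges l).length = l.length - 1 := by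
  induction l with
  | nil => rfl
  | cons a t ih => cases t <;> simp_all

lemma mem_pathEdges_iff {l : List α} {e : Sym2 α} :
    e ∈ pathEdges l ↔ ∃ (i : ℕ) (hi : i + 1 < l.length), e = s(l[i], l[i + 1]) := by
  induction l with
  | nil => simp
  | cons a t ih =>
    rcases t with _ | ⟨b, t⟩
    · simp
    simp only [pathEdges_cons_cons, List.mem_cons, ih, List.length_cons]
    constructor
    · rintro (rfl | ⟨i, hi, rfl⟩)
      exacts [⟨0, by omega, rfl⟩, ⟨i + 1, by omega, rfl⟩]
    · rintro ⟨_ | i, hi, rfl⟩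
      exacts [Or.inl rfl, Or.inr ⟨i, by omega, rfl⟩]

lemma mem_of_mem_pathEdges {l : List α} {e : Sym2 α} (he : e ∈ pathEdges l) {x : α}
    (hx : x ∈ e) : x ∈ l := by
  obtain ⟨i, hi, rfl⟩ := mem_pathEdges_iff.mp he
  rcases Sym2.mem_iff.mp hx with rfl | rfl <;> apply List.getElem_mem

lemma not_isDiag_of_mem_pathEdges {l : List α} (hl : l.Nodup) {e : Sym2 α}
    (he : e ∈ pathEdges l) : ¬ e.IsDiag := by
  obtain ⟨i, hi, rfl⟩ := mem_pathEdges_iff.mp he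
  simp [hl.getElem_inj_iff]

lemma pathEdges_append_cons_cons (l : List α) (a b : α) (t : List α) :
    pathEdges (l ++ a :: b :: t) = pathEdges (l ++ [a]) ++ s(a, b) :: pathEdges (b :: t) := by
  induction l with
  | nil => rfl
  | cons x r ih => rcases r with _ | ⟨y, r⟩ <;> simp_all

lemma pathEdges_reverse_perm (l : List α) : (pathEdges l.reverse).Perm (pathEdges l) := by
  induction l with
  | nil => rfl
  | cons a t ih =>
    rcases t with _ | ⟨b, t⟩
    · rfl
    obtain ⟨r, hr⟩ : ∃ r, (b :: t).reverse = r ++ [b] := ⟨t.reverse, by simp⟩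
    rw [List.reverse_cons, hr, List.append_assoc, List.singleton_append,
      pathEdges_append_cons_cons, pathEdges_singleton, ← hr, pathEdges_cons_cons, Sym2.eq_swap]
    exact (List.perm_append_singleton _ _).trans (ih.cons _)

lemma countP_pathEdges_eq_zero [DecidableEq α] {l : List α} {v : α} (hv : v ∉ l) :
    (pathEdges l).countP (v ∈ ·) = 0 :=
  List.countP_eq_zero.mpr fun _ he hve => hv (mem_of_mem_pathEdges he (by simpa using hve))

lemma countP_pathEdges_getElem [DecidableEq α] {l : List α} (hl : l.Nodup) {p : ℕ}
    (hp : p < l.length) :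
    (pathEdges l).countP (l[p] ∈ ·) =
      (if 0 < p then 1 else 0) + (if p + 1 < l.length then 1 else 0) := by
  induction l generalizing p with
  | nil => simp at hp
  | cons a t ih =>
    rcases t with _ | ⟨b, t⟩
    · simp at hp ⊢; omega
    rw [List.nodup_cons] at hl
    rw [pathEdges_cons_cons, List.countP_cons]
    rcases p with _ | q
    · simp [countP_pathEdges_eq_zero hl.1]
    · have hq : q < (b :: t).length := by simpa using hp
      have hxa : (b :: t)[q] ≠ a := fun h => hl.1 (h ▸ List.getElem_mem hq)
      have hxb : (b :: t)[q] = b ↔ q = 0 :=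
        hl.2.getElem_inj_iff (j := 0) (hj := by simp)
      simp only [List.getElem_cons_succ, ih hl.2 hq, Sym2.mem_iff, hxa, hxb, false_or,
        List.length_cons, decide_eq_true_eq]
      split_ifs <;> omega

lemma isChain_adj_of_pathEdges {G : SimpleGraph α} {l : List α}
    (h : ∀ e ∈ pathEdges l, e ∈ G.edgeSet) : l.IsChain G.Adj := by
  induction l with
  | nil => simp
  | cons a t ih =>
    rcases t with _ | ⟨b, t⟩
    · simp
    simp only [pathEdges_cons_cons, List.mem_cons, forall_eq_or_imp] at h
    exact List.isChain_cons_cons.mpr ⟨h.1, ih h.2⟩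

lemma exists_perm_append_singleton {l : List α} {u : α}
    (hu : l.head? = some u ∨ l.getLast? = some u) :
    ∃ q, l.Perm (q ++ [u]) ∧ (pathEdges l).Perm (pathEdges (q ++ [u])) := by
  rcases hu with hu | hu
  · obtain ⟨q, rfl⟩ := List.head?_eq_some_iff.mp hu
    refine ⟨q.reverse, ?_, ?_⟩
    · simpa using (List.reverse_perm (u :: q)).symm
    · simpa using (pathEdges_reverse_perm (u :: q)).symm
  · obtain ⟨q, rfl⟩ := List.getLast?_eq_some_iff.mp hu
    exact ⟨q, List.Perm.refl _, List.Perm.refl _⟩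

end PathEdges

section Containment

variable {V W : Type*}

lemma hasCopy_iff_isContained {G : SimpleGraph V} {H : SimpleGraph W} :
    HasCopy G H ↔ G ⊑ H :=
  ⟨fun ⟨f, hf, hadj⟩ => ⟨⟨⟨f, hadj _ _⟩, hf⟩⟩,
    fun ⟨c⟩ => ⟨c, c.injective, fun _ _ => c.toHom.map_adj⟩⟩

lemma K13_isContained_iff {G : SimpleGraph V} :
    K13 ⊑ G ↔ ∃ v, ∃ t : Finset V, #t = 3 ∧ ∀ w ∈ t, G.Adj v w := by
  rw [completeBipartiteGraph_isContained_iff]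
  constructor
  · rintro ⟨left, right, hleft, hright, hadj⟩
    obtain ⟨v, rfl⟩ := card_eq_one.mp hleft
    exact ⟨v, right, hright, fun w hw => hadj (by simp) hw⟩
  · rintro ⟨v, t, ht, hadj⟩
    refine ⟨{v}, t, by simp, by simpa using ht, fun x hx y hy => ?_⟩
    rw [coe_singleton, Set.mem_singleton_iff] at hx
    exact hx ▸ hadj y hy

lemma pathGraph_isContained_of_le_card [DecidableEq V] {G : SimpleGraph V}
    [DecidableRel G.Adj] (s : Finset V) (hs : s.Nonempty) {k : ℕ}
    (hdeg : ∀ v ∈ s, k ≤ #{w ∈ s | G.Adj v w}) : pathGraph (k + 1) ⊑ G := by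
  suffices ∀ j ≤ k, ∃ u v, ∃ p : G.Walk u v, p.IsPath ∧ p.length = j ∧ ∀ x ∈ p.support, x ∈ s by
    obtain ⟨u, v, p, hp, hlen, -⟩ := this k le_rfl
    exact hlen ▸ hp.isContained_pathGraph
  intro j hj
  induction j with
  | zero =>
    obtain ⟨v, hv⟩ := hs
    exact ⟨v, v, .nil, by simp, rfl, by simpa⟩
  | succ j ih =>
    obtain ⟨u, v, p, hp, hlen, hps⟩ := ih (by omega)
    -- `u` has more neighbours in `s` than `p` has vertices other than `u`
    obtain ⟨w, hw, hwp⟩ : ∃ w ∈ {w ∈ s | G.Adj u w}, w ∉ p.support.toFinset.erase u := by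
      by_contra! hsub
      have h1 := card_le_card hsub
      have h2 := List.toFinset_card_le p.support
      rw [card_erase_of_mem (by simp)] at h1
      have := hdeg u (hps u p.start_mem_support)
      simp only [Walk.length_support] at h2
      omega
    obtain ⟨hws, hadj⟩ := mem_filter.mp hw
    have hwu : w ∉ p.support := fun h => hwp (by simpa [G.ne_of_adj hadj |>.symm] using h)
    refine ⟨w, v, .cons hadj.symm p, (Walk.cons_isPath_iff _ _).mpr ⟨hp, hwu⟩,
      by simp [hlen], ?_⟩
    simpa [hws] using hps

end Containment

section Counting

variable {V : Type*} {m : ℕ} {F : Fin (m + 1) → V}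

lemma injective_sym2_castSucc_succ (hF : Function.Injective F) :
    Function.Injective fun i : Fin m => s(F i.castSucc, F i.succ) := by
  intro i j hij
  rcases Sym2.eq_iff.mp hij with ⟨h1, -⟩ | ⟨h1, h2⟩
  · exact Fin.castSucc_injective _ (hF h1)
  · have h1 := congrArg Fin.val (hF h1)
    have h2 := congrArg Fin.val (hF h2)
    simp only [Fin.val_castSucc, Fin.val_succ] at h1 h2
    omega

/-- Each edge of a path with vertices `F 0, …, F m` is charged to an endpoint in `I` (each
vertex of `I` is charged at most twice) or to its own element of `E`. -/
lemma le_two_mul_card_add_card [DecidableEq V] (hF : Function.Injective F) (I : Finset V)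
    (E : Finset (Sym2 V))
    (hcover : ∀ i : Fin m, F i.castSucc ∈ I ∨ F i.succ ∈ I ∨ s(F i.castSucc, F i.succ) ∈ E) :
    m ≤ 2 * #I + #E := by
  have hA : #{i : Fin m | F i.castSucc ∈ I} ≤ #I :=
    card_le_card_of_injOn _ (fun i hi => by simpa using hi)
      (hF.comp (Fin.castSucc_injective _)).injOn
  have hB : #{i : Fin m | F i.succ ∈ I} ≤ #I :=
    card_le_card_of_injOn _ (fun i hi => by simpa using hi) (hF.comp (Fin.succ_injective _)).injOn
  have hC : #{i : Fin m | s(F i.castSucc, F i.succ) ∈ E} ≤ #E :=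
    card_le_card_of_injOn _ (fun i hi => by simpa using hi)
      (injective_sym2_castSucc_succ hF).injOn
  have hcov : (univ : Finset (Fin m)) ⊆ ({i : Fin m | F i.castSucc ∈ I} : Finset _) ∪
      ({i : Fin m | F i.succ ∈ I} : Finset _) ∪
      ({i : Fin m | s(F i.castSucc, F i.succ) ∈ E} : Finset _) := fun i _ => by
    simpa [or_assoc] using hcover i
  have := (card_le_card hcov).trans
    ((card_union_le _ _).trans (Nat.add_le_add_right (card_union_le _ _) _))
  simp only [card_univ, Fintype.card_fin] at this
  omega

/-- The charges offered by a linear forest with at most `L` edges and components on `n i ≥ 2`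
vertices: two per inner vertex and one per component on at most `L` vertices. -/
lemma two_mul_sum_sub_two_add_card_le {ι : Type*} (S : Finset ι) (n : ι → ℕ) {L : ℕ}
    (hn : ∀ i ∈ S, 2 ≤ n i) (hL : ∑ i ∈ S, (n i - 1) ≤ L) :
    2 * ∑ i ∈ S, (n i - 2) + #{i ∈ S | n i ≤ L} ≤ 2 * L - 2 := by
  have hsum : ∑ i ∈ S, (n i - 2) + #S = ∑ i ∈ S, (n i - 1) := by
    rw [card_eq_sum_ones, ← sum_add_distrib]
    exact sum_congr rfl fun i hi => by have := hn i hi; omega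
  have hfilter := card_filter_le S (fun i => n i ≤ L)
  rcases le_or_gt 2 #S with h2 | h2
  · omega
  rcases (by omega : #S = 0 ∨ #S = 1) with h0 | h1
  · simp [card_eq_zero.mp h0]
  · obtain ⟨i, rfl⟩ := card_eq_one.mp h1
    have := hn i (mem_singleton_self i)
    simp only [sum_singleton, filter_singleton] at hL ⊢
    split_ifs <;> simp <;> omega

end Counting

def redEdges (h : History) : List (Sym2 ℕ) := (h.filter (·.2)).map Prod.fst

lemma mem_redEdges {h : History} {e : Sym2 ℕ} : e ∈ redEdges h ↔ (e, true) ∈ h := by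
  simp [redEdges]

@[simp] lemma redEdges_cons_true (e : Sym2 ℕ) (h : History) :
    redEdges ((e, true) :: h) = e :: redEdges h := by
  simp [redEdges]

@[simp] lemma redEdges_cons_false (e : Sym2 ℕ) (h : History) :
    redEdges ((e, false) :: h) = redEdges h := by
  simp [redEdges]

lemma length_redEdges_add_card_le {h : History} (T : Finset (Sym2 ℕ))
    (hT : ∀ e ∈ T, (e, false) ∈ h) : (redEdges h).length + #T ≤ h.length := by
  have hblue : T ⊆ ((h.filter (!·.2)).map Prod.fst).toFinset := fun e he => by
    simpa using hT e he
  have := (card_le_card hblue).trans (List.toFinset_card_le _)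
  rw [List.length_map] at this
  rw [redEdges, List.length_map, List.length_eq_length_filter_add (l := h) (·.2)]
  omega

def redDegree (h : History) (v : ℕ) : ℕ := (redEdges h).countP (v ∈ ·)

lemma redDegree_cons_true (e : Sym2 ℕ) (h : History) (v : ℕ) :
    redDegree ((e, true) :: h) v = redDegree h v + if v ∈ e then 1 else 0 := by
  simp [redDegree, List.countP_cons]

lemma redDegree_le_of_isSuffix {h₁ h₂ : History} (hh : h₁ <:+ h₂) (v : ℕ) :
    redDegree h₁ v ≤ redDegree h₂ v :=
  ((hh.sublist.filter _).map _).countP_le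

lemma card_le_redDegree {h : History} {v : ℕ} (t : Finset ℕ)
    (ht : ∀ w ∈ t, (histGraph h true).Adj v w) : #t ≤ redDegree h v := by
  have hsub : t.image (s(v, ·)) ⊆ ((redEdges h).filter (v ∈ ·)).toFinset := fun e he => by
    obtain ⟨w, hw, rfl⟩ := mem_image.mp he
    simpa [mem_redEdges] using (ht w hw).2
  rw [redDegree, List.countP_eq_length_filter, ← card_image_of_injective t
    (fun _ _ => Sym2.congr_right.mp)]
  exact (card_le_card hsub).trans (List.toFinset_card_le _)

lemma histGraph_mono {h₁ h₂ : History} (hh : h₁ <:+ h₂) (c : Bool) :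
    histGraph h₁ c ≤ histGraph h₂ c :=
  fun _ _ huv => ⟨huv.1, hh.subset huv.2⟩

lemma mem_edgeSet_histGraph {h : History} {c : Bool} {e : Sym2 ℕ} :
    e ∈ (histGraph h c).edgeSet ↔ ¬ e.IsDiag ∧ (e, c) ∈ h := by
  induction e using Sym2.ind
  rfl

section Play

variable (B : BuilderStrategy) (P : PainterStrategy)

lemma play_succ (n : ℕ) :
    play B P (n + 1) = (B (play B P n), P (play B P n) (B (play B P n))) :: play B P n := rfl

@[simp] lemma length_play (n : ℕ) : (play B P n).length = n := by
  induction n with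
  | zero => rfl
  | succ n ih => simp [play_succ, ih]

lemma play_isSuffix {m n : ℕ} (hmn : m ≤ n) : play B P m <:+ play B P n := by
  induction n, hmn using Nat.le_induction with
  | base => exact List.suffix_refl _
  | succ n _ ih => exact ih.trans (List.suffix_cons _ _)

variable {B P} in
lemma exists_of_mem_play {n : ℕ} {x : Sym2 ℕ × Bool} (hx : x ∈ play B P n) :
    ∃ m < n, x = (B (play B P m), P (play B P m) (B (play B P m))) := by
  induction n with
  | zero => simp [play, playFrom] at hx
  | succ n ih =>
    rcases List.mem_cons.mp hx with rfl | hx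
    · exact ⟨n, n.lt_succ_self, rfl⟩
    · obtain ⟨m, hm, rfl⟩ := ih hx
      exact ⟨m, by omega, rfl⟩

end Play

open Classical in
/-- Red, unless an endpoint already has two red edges (a red `K_{1,3}` would appear) or a red
walk of length `< L` joins the endpoints (a red cycle of length at most `L` would close). -/
noncomputable def painter (L : ℕ) : PainterStrategy := fun h e =>
  decide (∀ u v, e = s(u, v) →
    redDegree h u ≤ 1 ∧ ∀ p : (histGraph h true).Walk u v, L ≤ p.length)

lemma painter_eq_true_iff {L : ℕ} {h : History} {e : Sym2 ℕ} :
    painter L h e = true ↔ ∀ u v, e = s(u, v) →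
      redDegree h u ≤ 1 ∧ ∀ p : (histGraph h true).Walk u v, L ≤ p.length := by
  simp [painter]

lemma redDegree_play_painter_le_two (B : BuilderStrategy) (L n v : ℕ) :
    redDegree (play B (painter L) n) v ≤ 2 := by
  induction n with
  | zero => simp [play, playFrom, redDegree, redEdges]
  | succ n ih =>
    rw [play_succ]
    cases hc : painter L (play B (painter L) n) (B (play B (painter L) n))
    · simpa [redDegree] using ih
    · rw [redDegree_cons_true]
      split_ifs with hv
      · induction hB : B (play B (painter L) n) using Sym2.ind with | _ a b =>
        rw [hB, painter_eq_true_iff] at hc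
        rcases Sym2.mem_iff.mp (hB ▸ hv) with rfl | rfl
        · have := (hc v b rfl).1; omega
        · have := (hc v a Sym2.eq_swap).1; omega
      · omega

theorem not_hasCopy_K13_play (B : BuilderStrategy) (L n : ℕ) :
    ¬ HasCopy K13 (histGraph (play B (painter L) n) true) := by
  rw [hasCopy_iff_isContained, K13_isContained_iff]
  rintro ⟨v, t, ht, hadj⟩
  have := card_le_redDegree t hadj
  have := redDegree_play_painter_le_two B L n v
  omega

lemma exists_two_le_redDegree_or_walk_of_mem_play {B : BuilderStrategy} {L n : ℕ} {e : Sym2 ℕ}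
    (he : (e, false) ∈ play B (painter L) n) :
    ∃ u v, e = s(u, v) ∧ (2 ≤ redDegree (play B (painter L) n) u ∨
      ∃ p : (histGraph (play B (painter L) n) true).Walk u v, p.length < L) := by
  obtain ⟨m, hm, hx⟩ := exists_of_mem_play he
  obtain ⟨rfl, hc⟩ := Prod.ext_iff.mp hx
  have hsuf := play_isSuffix B (painter L) hm.le
  simp only at hc
  have hblue : ¬ painter L (play B (painter L) m) (B (play B (painter L) m)) = true := by
    simp [← hc]
  rw [painter_eq_true_iff] at hblue
  push Not at hblue
  obtain ⟨u, v, he, hred⟩ := hblue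
  refine ⟨u, v, he, ?_⟩
  by_cases hu : redDegree (play B (painter L) m) u ≤ 1
  · obtain ⟨p, hp⟩ := hred hu
    exact Or.inr ⟨p.mapLe (histGraph_mono hsuf true), by simpa using hp⟩
  · exact Or.inl ((by omega : 2 ≤ _).trans (redDegree_le_of_isSuffix hsuf u))

def innerVertices (S : Finset (List ℕ)) : Finset ℕ := S.biUnion fun l => l.tail.dropLast.toFinset

def shortEndPairs (L : ℕ) (S : Finset (List ℕ)) : Finset (Sym2 ℕ) :=
  {l ∈ S | l.length ≤ L}.image fun l => s(l.headI, l.getLastI)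

lemma getElem_mem_innerVertices {S : Finset (List ℕ)} {l : List ℕ} (hl : l ∈ S) {p : ℕ}
    (h0 : 0 < p) (h1 : p + 1 < l.length) : l[p] ∈ innerVertices S := by
  refine mem_biUnion.mpr ⟨l, hl, List.mem_toFinset.mpr ?_⟩
  have hp : p - 1 < l.tail.dropLast.length := by simp; omega
  convert List.getElem_mem hp using 1
  simp [List.getElem_dropLast, List.getElem_tail, Nat.sub_add_cancel h0]

lemma card_innerVertices_le (S : Finset (List ℕ)) :
    #(innerVertices S) ≤ ∑ l ∈ S, (l.length - 2) :=
  card_biUnion_le.trans <| sum_le_sum fun l _ => (List.toFinset_card_le _).trans (by simp; omega)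

lemma card_shortEndPairs_le (L : ℕ) (S : Finset (List ℕ)) :
    #(shortEndPairs L S) ≤ #{l ∈ S | l.length ≤ L} :=
  card_image_le

structure IsRedPathCover (h : History) (S : Finset (List ℕ)) : Prop where
  nodup : ∀ l ∈ S, l.Nodup
  ne_nil : ∀ l ∈ S, l ≠ []
  pairwise_disjoint : (S : Set (List ℕ)).Pairwise List.Disjoint
  redEdges_eq : (redEdges h : Multiset (Sym2 ℕ)) = ∑ l ∈ S, (pathEdges l : Multiset (Sym2 ℕ))

namespace IsRedPathCover

variable {h : History} {S : Finset (List ℕ)}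

lemma empty : IsRedPathCover [] ∅ :=
  ⟨by simp, by simp, by simp, rfl⟩

lemma cons_false (hS : IsRedPathCover h S) (e : Sym2 ℕ) : IsRedPathCover ((e, false) :: h) S :=
  ⟨hS.nodup, hS.ne_nil, hS.pairwise_disjoint, by simpa using hS.redEdges_eq⟩

lemma eq_of_mem (hS : IsRedPathCover h S) {l₁ l₂ : List ℕ} (hl₁ : l₁ ∈ S) (hl₂ : l₂ ∈ S)
    {x : ℕ} (hx₁ : x ∈ l₁) (hx₂ : x ∈ l₂) : l₁ = l₂ := by
  by_contra hne
  exact hS.pairwise_disjoint hl₁ hl₂ hne hx₁ hx₂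

lemma mem_redEdges_iff (hS : IsRedPathCover h S) {e : Sym2 ℕ} :
    e ∈ redEdges h ↔ ∃ l ∈ S, e ∈ pathEdges l := by
  rw [← Multiset.mem_coe, hS.redEdges_eq, Multiset.mem_sum]
  simp

lemma length_redEdges (hS : IsRedPathCover h S) :
    (redEdges h).length = ∑ l ∈ S, (l.length - 1) := by
  rw [← Multiset.coe_card, hS.redEdges_eq, Multiset.card_sum]
  simp

lemma redDegree_eq_sum (hS : IsRedPathCover h S) (v : ℕ) :
    redDegree h v = ∑ l ∈ S, (pathEdges l).countP (v ∈ ·) := by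
  rw [redDegree, ← Multiset.coe_countP, hS.redEdges_eq, ← Multiset.coe_countPAddMonoidHom,
    map_sum]
  simp

lemma redDegree_eq (hS : IsRedPathCover h S) {l : List ℕ} (hl : l ∈ S) {v : ℕ} (hv : v ∈ l) :
    redDegree h v = (pathEdges l).countP (v ∈ ·) :=
  (hS.redDegree_eq_sum v).trans <| sum_eq_single_of_mem l hl fun _ hl' hne =>
    countP_pathEdges_eq_zero fun hv' => hne (hS.eq_of_mem hl' hl hv' hv)

lemma redDegree_eq_zero (hS : IsRedPathCover h S) {v : ℕ} (hv : ∀ l ∈ S, v ∉ l) :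
    redDegree h v = 0 := by
  rw [hS.redDegree_eq_sum]
  exact sum_eq_zero fun l hl => countP_pathEdges_eq_zero (hv l hl)

lemma exists_walk (hS : IsRedPathCover h S) {l : List ℕ} (hl : l ∈ S) {a b : ℕ}
    (ha : l.head? = some a) (hb : l.getLast? = some b) :
    ∃ p : (histGraph h true).Walk a b, p.length = l.length - 1 := by
  have hne := hS.ne_nil l hl
  have hchain : l.IsChain (histGraph h true).Adj := isChain_adj_of_pathEdges fun e he =>
    mem_edgeSet_histGraph.mpr ⟨not_isDiag_of_mem_pathEdges (hS.nodup l hl) he,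
      mem_redEdges.mp (hS.mem_redEdges_iff.mpr ⟨l, hl, he⟩)⟩
  exact ⟨(Walk.ofSupport l hne hchain).copy ((List.head_eq_iff_head?_eq_some hne).mpr ha)
    ((List.getLast_eq_iff_getLast?_eq_some hne).mpr hb), by simp⟩

lemma insert_singleton (hS : IsRedPathCover h S) {v : ℕ} (hv : ∀ l ∈ S, v ∉ l) :
    IsRedPathCover h (insert [v] S) := by
  have hvS : [v] ∉ S := fun hmem => hv _ hmem (List.mem_singleton_self v)
  refine ⟨?_, ?_, ?_, ?_⟩
  · simpa using hS.nodup
  · simpa using hS.ne_nil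
  · rw [coe_insert, Set.pairwise_insert]
    refine ⟨hS.pairwise_disjoint, fun l hl _ => ⟨?_, ?_⟩⟩ <;>
      simpa [List.disjoint_singleton, List.singleton_disjoint] using hv l hl
  · rw [sum_insert hvS, hS.redEdges_eq]
    simp

lemma exists_superset_of_redDegree_le_one (hS : IsRedPathCover h S) {v : ℕ}
    (hv : redDegree h v ≤ 1) :
    ∃ S', IsRedPathCover h S' ∧ S ⊆ S' ∧ ∃ l ∈ S', l.head? = some v ∨ l.getLast? = some v := by
  by_cases hmem : ∃ l ∈ S, v ∈ l
  · obtain ⟨l, hl, hvl⟩ := hmem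
    obtain ⟨p, hp, rfl⟩ := List.mem_iff_getElem.mp hvl
    rw [hS.redDegree_eq hl hvl, countP_pathEdges_getElem (hS.nodup l hl) hp] at hv
    refine ⟨S, hS, subset_refl S, l, hl, ?_⟩
    rw [List.head?_eq_getElem?, List.getLast?_eq_getElem?]
    by_cases hp0 : p = 0
    · subst hp0; simp
    · right
      rw [show l.length - 1 = p by split_ifs at hv <;> omega]
      simp
  · push Not at hmem
    exact ⟨_, hS.insert_singleton hmem, subset_insert _ _, [v], mem_insert_self _ _, by simp⟩

lemma replace (hS : IsRedPathCover h S) {l₁ l₂ : List ℕ} (hl₁ : l₁ ∈ S) (hl₂ : l₂ ∈ S)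
    (hne : l₁ ≠ l₂) {m : List ℕ} (hm : m.Perm (l₁ ++ l₂)) {e : Sym2 ℕ}
    (hme : (pathEdges m : Multiset (Sym2 ℕ)) = pathEdges l₁ + e ::ₘ pathEdges l₂) :
    IsRedPathCover ((e, true) :: h) (insert m ((S.erase l₁).erase l₂)) := by
  have hmem : ∀ {x}, x ∈ m ↔ x ∈ l₁ ∨ x ∈ l₂ := by simp [hm.mem_iff]
  have hdisj : ∀ l ∈ (S.erase l₁).erase l₂, m.Disjoint l := fun l hl x hxm hxl => by
    simp only [mem_erase] at hl
    rcases hmem.mp hxm with hx | hx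
    · exact hl.2.1 (hS.eq_of_mem hl.2.2 hl₁ hxl hx)
    · exact hl.1 (hS.eq_of_mem hl.2.2 hl₂ hxl hx)
  obtain ⟨x, hx⟩ := List.exists_mem_of_ne_nil _ (hS.ne_nil l₁ hl₁)
  have hxm : x ∈ m := hmem.mpr (Or.inl hx)
  have hmS : m ∉ (S.erase l₁).erase l₂ := fun hmS => hdisj m hmS hxm hxm
  refine ⟨?_, ?_, ?_, ?_⟩
  · simp only [mem_insert, forall_eq_or_imp]
    refine ⟨hm.nodup_iff.mpr (List.nodup_append.mpr ⟨hS.nodup _ hl₁, hS.nodup _ hl₂, ?_⟩),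
      fun l hl => hS.nodup l (mem_of_mem_erase (mem_of_mem_erase hl))⟩
    rintro a ha _ hb rfl
    exact hS.pairwise_disjoint hl₁ hl₂ hne ha hb
  · simp only [mem_insert, forall_eq_or_imp]
    exact ⟨List.ne_nil_of_mem hxm, fun l hl => hS.ne_nil l (mem_of_mem_erase (mem_of_mem_erase hl))⟩
  · rw [coe_insert, Set.pairwise_insert]
    refine ⟨hS.pairwise_disjoint.mono fun l hl => ?_, fun l hl _ => ⟨hdisj l hl, (hdisj l hl).symm⟩⟩
    exact mem_of_mem_erase (mem_of_mem_erase hl)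
  · rw [redEdges_cons_true, ← Multiset.cons_coe, hS.redEdges_eq, sum_insert hmS, hme,
      ← add_sum_erase _ _ hl₁, ← add_sum_erase _ _ (mem_erase.mpr ⟨hne.symm, hl₂⟩)]
    simp only [← Multiset.singleton_add]
    abel

lemma merge (hS : IsRedPathCover h S) {l₁ l₂ : List ℕ} (hl₁ : l₁ ∈ S) (hl₂ : l₂ ∈ S)
    (hne : l₁ ≠ l₂) {u v : ℕ} (hu : l₁.head? = some u ∨ l₁.getLast? = some u)
    (hv : l₂.head? = some v ∨ l₂.getLast? = some v) :
    ∃ S', IsRedPathCover ((s(u, v), true) :: h) S' := by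
  obtain ⟨q, hq, hqe⟩ := exists_perm_append_singleton hu
  obtain ⟨r, hr, hre⟩ := exists_perm_append_singleton hv
  refine ⟨_, hS.replace hl₁ hl₂ hne (m := q ++ u :: v :: r.reverse) ?_ ?_⟩
  · rw [show q ++ u :: v :: r.reverse = (q ++ [u]) ++ (r ++ [v]).reverse by simp]
    exact ((List.reverse_perm _).append_left _).trans (hq.symm.append hr.symm)
  · have hv' : v :: r.reverse = (r ++ [v]).reverse := by simp
    rw [pathEdges_append_cons_cons, ← Multiset.coe_add, ← Multiset.cons_coe,
      Multiset.coe_eq_coe.mpr hqe.symm, hv',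
      Multiset.coe_eq_coe.mpr ((pathEdges_reverse_perm _).trans hre.symm)]

lemma exists_cons_painter {L : ℕ} (hL : 1 ≤ L) (hS : IsRedPathCover h S) (e : Sym2 ℕ)
    (hcard : (redEdges ((e, painter L h e) :: h)).length ≤ L) :
    ∃ S', IsRedPathCover ((e, painter L h e) :: h) S' := by
  cases hc : painter L h e
  · exact ⟨S, hS.cons_false e⟩
  induction e using Sym2.ind with | _ u v =>
  rw [hc, redEdges_cons_true, List.length_cons] at hcard
  rw [painter_eq_true_iff] at hc
  obtain ⟨hu, hwalk⟩ := hc u v rfl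
  have huv : u ≠ v := by
    rintro rfl
    have := hwalk Walk.nil
    simp only [Walk.length_nil] at this
    omega
  obtain ⟨S₁, hS₁, -, l₁, hl₁, hu₁⟩ := hS.exists_superset_of_redDegree_le_one hu
  obtain ⟨S₂, hS₂, hS₁₂, l₂, hl₂, hv₂⟩ :=
    hS₁.exists_superset_of_redDegree_le_one (hc v u Sym2.eq_swap).1
  by_cases heq : l₁ = l₂
  · subst heq
    exfalso
    -- `u`, `v` are the two ends of `l₁`, so Painter's rule forces `l₁` to have `L` edges already
    obtain ⟨p, hp⟩ : ∃ p : (histGraph h true).Walk u v, p.length = l₁.length - 1 := by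
      rcases hu₁ with hu₁ | hu₁ <;> rcases hv₂ with hv₂ | hv₂
      · exact absurd (Option.some_injective _ (hu₁.symm.trans hv₂)) huv
      · exact hS₂.exists_walk hl₂ hu₁ hv₂
      · obtain ⟨p, hp⟩ := hS₂.exists_walk hl₂ hv₂ hu₁
        exact ⟨p.reverse, by simp [hp]⟩
      · exact absurd (Option.some_injective _ (hu₁.symm.trans hv₂)) huv
    have hlen : l₁.length - 1 ≤ (redEdges h).length :=
      hS₂.length_redEdges ▸ single_le_sum (f := fun l => l.length - 1) (by simp) hl₂
    have := hwalk p
    omega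
  · exact hS₂.merge (hS₁₂ hl₁) hl₂ heq hu₁ hv₂

lemma filter_two_le_length (hS : IsRedPathCover h S) :
    IsRedPathCover h {l ∈ S | 2 ≤ l.length} := by
  refine ⟨fun l hl => hS.nodup l (mem_filter.mp hl).1, fun l hl => hS.ne_nil l (mem_filter.mp hl).1,
    hS.pairwise_disjoint.mono fun l hl => (mem_filter.mp hl).1, ?_⟩
  rw [hS.redEdges_eq, sum_filter_of_ne fun l _ hne => ?_]
  by_contra hl
  exact hne ((Multiset.coe_eq_zero _).mpr (List.eq_nil_of_length_eq_zero (by simp; omega)))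

lemma mem_innerVertices_of_two_le_redDegree (hS : IsRedPathCover h S) {v : ℕ}
    (hv : 2 ≤ redDegree h v) : v ∈ innerVertices S := by
  by_cases hmem : ∃ l ∈ S, v ∈ l
  · obtain ⟨l, hl, hvl⟩ := hmem
    obtain ⟨p, hp, rfl⟩ := List.mem_iff_getElem.mp hvl
    rw [hS.redDegree_eq hl hvl, countP_pathEdges_getElem (hS.nodup l hl) hp] at hv
    exact getElem_mem_innerVertices hl (by split_ifs at hv <;> omega) (by split_ifs at hv <;> omega)
  · push Not at hmem
    rw [hS.redDegree_eq_zero hmem] at hv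
    omega

/-- A red walk stays inside one path of the cover and moves at most one position per step. -/
lemma exists_getElem_of_walk (hS : IsRedPathCover h S) {u v : ℕ}
    (p : (histGraph h true).Walk u v) {l : List ℕ} (hl : l ∈ S) {a : ℕ} (ha : a < l.length)
    (hu : l[a] = u) :
    ∃ b, ∃ hb : b < l.length, l[b] = v ∧ a ≤ b + p.length ∧ b ≤ a + p.length := by
  induction p generalizing a with
  | nil => exact ⟨a, ha, hu, by simp, by simp⟩
  | @cons u w v hadj p ih =>
    obtain ⟨l', hl', he⟩ := hS.mem_redEdges_iff.mp (mem_redEdges.mpr hadj.2)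
    obtain rfl : l' = l := hS.eq_of_mem hl' hl (mem_of_mem_pathEdges he (Sym2.mem_mk_left u w))
      (hu ▸ List.getElem_mem ha)
    obtain ⟨i, hi, hei⟩ := mem_pathEdges_iff.mp he
    have hnd := hS.nodup l' hl
    obtain ⟨c, hc, hw, hac⟩ : ∃ c, ∃ hc : c < l'.length, l'[c] = w ∧ (a = c + 1 ∨ c = a + 1) := by
      rcases Sym2.eq_iff.mp hei with ⟨h1, h2⟩ | ⟨h1, h2⟩
      · have : a = i := hnd.getElem_inj_iff.mp (hu.trans h1)
        exact ⟨i + 1, hi, h2.symm, Or.inr (by omega)⟩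
      · have : a = i + 1 := hnd.getElem_inj_iff.mp (hu.trans h1)
        exact ⟨i, by omega, h2.symm, Or.inl (by omega)⟩
    obtain ⟨b, hb, hbv, h1, h2⟩ := ih hc hw
    simp only [Walk.length_cons]
    exact ⟨b, hb, hbv, by omega, by omega⟩

lemma mem_innerVertices_or_mem_shortEndPairs_of_walk (hS : IsRedPathCover h S) {L u v : ℕ}
    (p : (histGraph h true).Walk u v) (hp : p.length < L) (huv : u ≠ v) :
    u ∈ innerVertices S ∨ v ∈ innerVertices S ∨ s(u, v) ∈ shortEndPairs L S := by
  obtain ⟨l, hl, a, ha, hua⟩ : ∃ l ∈ S, ∃ a, ∃ ha : a < l.length, l[a] = u := by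
    cases p with
    | nil => exact absurd rfl huv
    | cons hadj _ =>
      obtain ⟨l, hl, he⟩ := hS.mem_redEdges_iff.mp (mem_redEdges.mpr hadj.2)
      exact ⟨l, hl, List.mem_iff_getElem.mp (mem_of_mem_pathEdges he (Sym2.mem_mk_left _ _))⟩
  obtain ⟨b, hb, hvb, hab, hba⟩ := hS.exists_getElem_of_walk p hl ha hua
  have hne : a ≠ b := by
    rintro rfl
    exact huv (hua.symm.trans hvb)
  by_cases ha' : 0 < a ∧ a + 1 < l.length
  · exact Or.inl (hua ▸ getElem_mem_innerVertices hl ha'.1 ha'.2)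
  by_cases hb' : 0 < b ∧ b + 1 < l.length
  · exact Or.inr (Or.inl (hvb ▸ getElem_mem_innerVertices hl hb'.1 hb'.2))
  -- otherwise `u` and `v` are the two ends of `l`
  have hhead : l.headI = l[0] := by
    cases l with
    | nil => simp at ha
    | cons x t => rfl
  have hlast : l.getLastI = l[l.length - 1] := by
    rw [List.getLastI_eq_getLast?_getD, List.getLast?_eq_getElem?, List.getElem?_eq_getElem]
    rfl
  refine Or.inr (Or.inr (mem_image.mpr ⟨l, mem_filter.mpr ⟨hl, by omega⟩, ?_⟩))
  subst hua hvb
  rw [hhead, hlast]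
  rcases (by omega : a = 0 ∧ b = l.length - 1 ∨ a = l.length - 1 ∧ b = 0) with
    ⟨rfl, rfl⟩ | ⟨rfl, rfl⟩
  · rfl
  · exact Sym2.eq_swap

lemma mem_innerVertices_or_mem_shortEndPairs_of_blue {B : BuilderStrategy} {L n : ℕ}
    (hS : IsRedPathCover (play B (painter L) n) S) {x y : ℕ}
    (hxy : x ≠ y) (he : (s(x, y), false) ∈ play B (painter L) n) :
    x ∈ innerVertices S ∨ y ∈ innerVertices S ∨ s(x, y) ∈ shortEndPairs L S := by
  obtain ⟨u, v, huv, hu | ⟨p, hp⟩⟩ := exists_two_le_redDegree_or_walk_of_mem_play he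
  · have := hS.mem_innerVertices_of_two_le_redDegree hu
    rcases Sym2.eq_iff.mp huv with ⟨rfl, rfl⟩ | ⟨rfl, rfl⟩ <;> tauto
  · rcases Sym2.eq_iff.mp huv with ⟨rfl, rfl⟩ | ⟨rfl, rfl⟩
    · exact hS.mem_innerVertices_or_mem_shortEndPairs_of_walk p hp hxy
    · rw [Sym2.eq_swap]
      have := hS.mem_innerVertices_or_mem_shortEndPairs_of_walk p hp hxy.symm
      tauto

end IsRedPathCover

theorem exists_isRedPathCover_play (B : BuilderStrategy) {L : ℕ} (hL : 1 ≤ L) {n : ℕ}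
    (hn : (redEdges (play B (painter L) n)).length ≤ L) :
    ∃ S, IsRedPathCover (play B (painter L) n) S := by
  induction n with
  | zero => exact ⟨∅, .empty⟩
  | succ n ih =>
    have hmono : (redEdges (play B (painter L) n)).length ≤
        (redEdges (play B (painter L) (n + 1))).length :=
      (((play_isSuffix B _ n.le_succ).sublist.filter _).map _).length_le
    obtain ⟨S, hS⟩ := ih (hmono.trans hn)
    exact hS.exists_cons_painter hL _ hn

theorem not_hasCopy_pathGraph_play {ℓ : ℕ} (hℓ : 2 ≤ ℓ) (B : BuilderStrategy) {k : ℕ}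
    (hk : k ≤ 3 * ℓ / 2 - 1) :
    ¬ HasCopy (pathGraph ℓ) (histGraph (play B (painter (ℓ / 2)) k) false) := by
  obtain ⟨m, rfl⟩ : ∃ m, ℓ = m + 1 := ⟨ℓ - 1, by omega⟩
  rintro ⟨F, hF, hadj⟩
  set L := (m + 1) / 2
  set h := play B (painter L) k
  have hblue (i : Fin m) : F i.castSucc ≠ F i.succ ∧ (s(F i.castSucc, F i.succ), false) ∈ h :=
    hadj _ _ (pathGraph_adj.mpr (Or.inl (by simp)))
  have hred : (redEdges h).length ≤ L := by
    have := length_redEdges_add_card_le (univ.image fun i : Fin m => s(F i.castSucc, F i.succ))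
      (by simpa using fun i => (hblue i).2)
    rw [card_image_of_injective _ (injective_sym2_castSucc_succ hF), card_univ,
      Fintype.card_fin, length_play] at this
    omega
  obtain ⟨S₀, hS₀⟩ := exists_isRedPathCover_play B (by omega : 1 ≤ L) hred
  have hS := hS₀.filter_two_le_length
  have hcount := le_two_mul_card_add_card hF _ _ fun i =>
    hS.mem_innerVertices_or_mem_shortEndPairs_of_blue (hblue i).1 (hblue i).2
  have := card_innerVertices_le {l ∈ S₀ | 2 ≤ l.length}
  have := card_shortEndPairs_le L {l ∈ S₀ | 2 ≤ l.length}
  have := two_mul_sum_sub_two_add_card_le _ List.length (fun l hl => (mem_filter.mp hl).2)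
    (hS.length_redEdges ▸ hred)
  omega

lemma exists_fresh_edge (h : History) : ∃ e : Sym2 ℕ, ¬ e.IsDiag ∧ ∀ c, (e, c) ∉ h := by
  have hinf := Set.infinite_range_of_injective (f := fun n : ℕ => s(0, n + 1))
    fun a b hab => by simpa using hab
  obtain ⟨_, ⟨n, rfl⟩, hn⟩ := hinf.exists_notMem_finset (h.map Prod.fst).toFinset
  exact ⟨s(0, n + 1), by simp,
    fun c hc => hn (List.mem_toFinset.mpr (List.mem_map.mpr ⟨_, hc, rfl⟩))⟩

open Classical in
noncomputable def builder (E : Finset (Sym2 ℕ)) : BuilderStrategy := fun h =>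
  if hE : ∃ e ∈ E, ∀ c, (e, c) ∉ h then hE.choose else (exists_fresh_edge h).choose

lemma validStrategy_builder {E : Finset (Sym2 ℕ)} (hE : ∀ e ∈ E, ¬ e.IsDiag) :
    ValidStrategy (builder E) := by
  intro h
  unfold builder
  split_ifs with hx
  · exact ⟨hE _ hx.choose_spec.1, hx.choose_spec.2⟩
  · exact (exists_fresh_edge h).choose_spec

lemma min_le_card_drawn (E : Finset (Sym2 ℕ)) (P : PainterStrategy) (n : ℕ) :
    min n #E ≤ #{e ∈ E | ∃ c, (e, c) ∈ play (builder E) P n} := by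
  induction n with
  | zero => simp
  | succ n ih =>
    have hmono : {e ∈ E | ∃ c, (e, c) ∈ play (builder E) P n} ⊆
        {e ∈ E | ∃ c, (e, c) ∈ play (builder E) P (n + 1)} :=
      monotone_filter_right _ fun _ _ ⟨c, hc⟩ => ⟨c, (play_isSuffix _ _ n.le_succ).subset hc⟩
    by_cases hx : ∃ e ∈ E, ∀ c, (e, c) ∉ play (builder E) P n
    · have hB : builder E (play (builder E) P n) = hx.choose := dif_pos hx
      have hnew : hx.choose ∉ {e ∈ E | ∃ c, (e, c) ∈ play (builder E) P n} := fun hmem =>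
        have ⟨_, c, hc⟩ := mem_filter.mp hmem
        hx.choose_spec.2 c hc
      have hins : insert hx.choose {e ∈ E | ∃ c, (e, c) ∈ play (builder E) P n} ⊆
          {e ∈ E | ∃ c, (e, c) ∈ play (builder E) P (n + 1)} :=
        insert_subset (mem_filter.mpr ⟨hx.choose_spec.1, _,
          by rw [play_succ, hB]; exact List.mem_cons_self⟩) hmono
      have := card_le_card hins
      rw [card_insert_of_notMem hnew] at this
      omega
    · push Not at hx
      have := card_le_card hmono
      rw [filter_true_of_mem hx] at this
      omega

lemma forall_exists_mem_play_builder (E : Finset (Sym2 ℕ)) (P : PainterStrategy) :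
    ∀ e ∈ E, ∃ c, (e, c) ∈ play (builder E) P #E := by
  have := min_le_card_drawn E P #E
  rw [min_self] at this
  intro e he
  rw [← eq_of_subset_of_card_le (filter_subset _ E) this] at he
  exact (mem_filter.mp he).2

theorem builderWins_K13_pathGraph (m : ℕ) : ∃ n, BuilderWins K13 (pathGraph (m + 1)) n := by
  classical
  set E : Finset (Sym2 ℕ) := {e ∈ (range (m + 3)).sym2 | ¬ e.IsDiag}
  refine ⟨#E, builder E, validStrategy_builder fun e he => (mem_filter.mp he).2, fun P => ?_⟩
  set H := play (builder E) P #E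
  have hdrawn : ∀ u < m + 3, ∀ v < m + 3, u ≠ v →
      (histGraph H true).Adj u v ∨ (histGraph H false).Adj u v := by
    intro u hu v hv huv
    obtain ⟨c, hc⟩ := forall_exists_mem_play_builder E P s(u, v) (by simp [E, hu, hv, huv])
    cases c
    exacts [Or.inr ⟨huv, hc⟩, Or.inl ⟨huv, hc⟩]
  rw [hasCopy_iff_isContained, hasCopy_iff_isContained]
  by_cases hK : K13 ⊑ histGraph H true
  · exact Or.inl hK
  refine Or.inr (pathGraph_isContained_of_le_card (range (m + 3)) (by simp) fun v hv => ?_)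
  have hred : #{w ∈ range (m + 3) | (histGraph H true).Adj v w} ≤ 2 := by
    by_contra! h3
    obtain ⟨t, ht, htcard⟩ := exists_subset_card_eq (show 3 ≤ _ from h3)
    exact hK (K13_isContained_iff.mpr ⟨v, t, htcard, fun w hw => (mem_filter.mp (ht hw)).2⟩)
  have hcover : (range (m + 3)).erase v ⊆ {w ∈ range (m + 3) | (histGraph H true).Adj v w} ∪
      {w ∈ range (m + 3) | (histGraph H false).Adj v w} := fun w hw => by
    obtain ⟨hwv, hw⟩ := mem_erase.mp hw
    rcases hdrawn v (mem_range.mp hv) w (mem_range.mp hw) (Ne.symm hwv) with h | h <;>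
      simp [hw, h]
  have := (card_le_card hcover).trans (card_union_le _ _)
  rw [card_erase_of_mem hv, card_range] at this
  omega

/-- Lower bound: `r̃(K_{1,3}, P_ℓ) ≥ ⌊3ℓ/2⌋`; moreover Painter has a strategy that
prevents both a red `K_{1,3}` and a blue path on `ℓ` vertices during the first
`⌊3ℓ/2⌋ - 1` rounds, against any valid Builder strategy. -/
theorem onlineRamsey_K13_path_lower (ℓ : ℕ) (hℓ : 2 ≤ ℓ) :
    3 * ℓ / 2 ≤ onlineRamsey K13 (pathGraph ℓ) ∧
    ∃ P : PainterStrategy, ∀ B : BuilderStrategy, ValidStrategy B →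
      ∀ k ≤ 3 * ℓ / 2 - 1,
        ¬ HasCopy K13 (histGraph (play B P k) true) ∧
        ¬ HasCopy (pathGraph ℓ) (histGraph (play B P k) false) := by
  have hpainter : ∀ B : BuilderStrategy, ValidStrategy B → ∀ k ≤ 3 * ℓ / 2 - 1,
      ¬ HasCopy K13 (histGraph (play B (painter (ℓ / 2)) k) true) ∧
      ¬ HasCopy (pathGraph ℓ) (histGraph (play B (painter (ℓ / 2)) k) false) :=
    fun B _ k hk => ⟨not_hasCopy_K13_play B _ k, not_hasCopy_pathGraph_play hℓ B hk⟩
  refine ⟨?_, _, hpainter⟩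
  obtain ⟨m, rfl⟩ : ∃ m, ℓ = m + 1 := ⟨ℓ - 1, by omega⟩
  refine le_csInf (builderWins_K13_pathGraph m) fun n ⟨B, hB, hwin⟩ => ?_
  by_contra hn
  rcases hwin (painter ((m + 1) / 2)) with h | h
  exacts [(hpainter B hB n (by omega)).1 h, (hpainter B hB n (by omega)).2 h]
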